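/- The Laplace transform of ℓ(x) = (1/x) e^{−λx} I₁(λx) is Lℓ(s) = λ / (λ + s + √((λ+s)² − λ²)) for s > 0. -/

import Mathlib

/-!
Expanding `I₁` in its power series, `e^{-s x} ℓ(x) = ∑ₙ (λ/2)^{2n+1} x^{2n} e^{-(λ+s) x} / (n! (n+1)!)`,
and the `n`-th term integrates to `(2n)!/(n! (n+1)!) · Z^{2n+1} = Cₙ Z^{2n+1}` with `Z = λ / (2(λ+s))`.
All terms are nonnegative, so the integral is `Z · ∑ Cₙ (Z²)ⁿ`.

For `0 ≤ z ≤ 1/4` the partial sums `Sₙ` of `∑ Cₙ zⁿ` satisfy `S_{N+1} ≤ z S_N² + 1` by the Catalan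
recursion, so they stay below the smaller fixed point `c(z) = 2 / (1 + √(1 - 4z))` of `x ↦ z x² + 1`.
The full sum is also such a fixed point (Cauchy product), hence equals `c(z)`.
-/

open Real MeasureTheory

/-- Modified Bessel function of the first kind of order 1. -/
noncomputable def besselI1 (z : ℝ) : ℝ :=
  ∑' n : ℕ, (z / 2) ^ (2 * n + 1) / ((Nat.factorial n : ℝ) * Nat.factorial (n + 1))

/-- The total-length density `ℓ(x) = (1/x) e^{-λx} I₁(λx)` of an exponential critical
binary Galton-Watson tree. -/
noncomputable def ellDensity (lam x : ℝ) : ℝ :=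
  (1 / x) * Real.exp (-lam * x) * besselI1 (lam * x)

open Finset
open scoped Nat

/-- The Catalan generating function, written so that it is also correct at `z = 0`. -/
noncomputable def catalanGF (z : ℝ) : ℝ := 2 / (1 + √(1 - 4 * z))

lemma catalanGF_nonneg (z : ℝ) : 0 ≤ catalanGF z := by
  unfold catalanGF; positivity

section CatalanGF

variable {z : ℝ}

lemma catalanGF_eq_mul_sq_add_one (hz : z ≤ 1 / 4) : catalanGF z = z * catalanGF z ^ 2 + 1 := by
  have hq : √(1 - 4 * z) ^ 2 = 1 - 4 * z := sq_sqrt (by linarith)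
  unfold catalanGF
  field_simp
  linear_combination (-1 : ℝ) * hq

lemma two_mul_mul_catalanGF_le_one (hz : z ≤ 1 / 4) : 2 * z * catalanGF z ≤ 1 := by
  have hq : √(1 - 4 * z) ^ 2 = 1 - 4 * z := sq_sqrt (by linarith)
  have hpos : 0 < 1 + √(1 - 4 * z) := by positivity
  unfold catalanGF
  rw [mul_div_assoc', div_le_one hpos]
  nlinarith [sqrt_nonneg (1 - 4 * z)]

lemma sum_range_succ_catalan_mul_pow_le (hz : 0 ≤ z) (N : ℕ) :
    ∑ n ∈ range (N + 1), (catalan n : ℝ) * z ^ n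
      ≤ z * (∑ n ∈ range N, (catalan n : ℝ) * z ^ n) ^ 2 + 1 := by
  set t : ℕ → ℝ := fun n => (catalan n : ℝ) * z ^ n
  have hsucc : ∀ n, t (n + 1) = z * ∑ k ∈ range (n + 1), t k * t (n - k) := by
    intro n
    simp only [t, catalan_succ, Fin.sum_univ_eq_sum_range (fun k => catalan k * catalan (n - k)),
      Nat.cast_sum, Nat.cast_mul, mul_sum, sum_mul]
    refine sum_congr rfl fun k hk => ?_
    rw [← Nat.add_sub_of_le (Nat.lt_succ_iff.mp (mem_range.mp hk))]
    simp only [Nat.add_sub_cancel_left]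
    ring
  calc ∑ n ∈ range (N + 1), t n
      = z * ∑ n ∈ range N, ∑ k ∈ range (n + 1), t k * t (n - k) + 1 := by
        have ht0 : t 0 = 1 := by simp [t]
        rw [sum_range_succ', ht0, mul_sum]
        simp only [hsucc]
    _ = z * ∑ m ∈ range N, ∑ k ∈ range (N - m), t m * t k + 1 := by
        rw [sum_range_diag_flip N fun k l => t k * t l]
    _ ≤ z * ∑ m ∈ range N, ∑ k ∈ range N, t m * t k + 1 := by
        gcongr with m
        exact Nat.sub_le N m
    _ = z * (∑ n ∈ range N, t n) ^ 2 + 1 := by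
        rw [sq, sum_mul_sum]

lemma sum_range_catalan_mul_pow_le_catalanGF (hz₀ : 0 ≤ z) (hz : z ≤ 1 / 4) (N : ℕ) :
    ∑ n ∈ range N, (catalan n : ℝ) * z ^ n ≤ catalanGF z := by
  induction N with
  | zero => simp [catalanGF_nonneg]
  | succ N ih =>
    calc ∑ n ∈ range (N + 1), (catalan n : ℝ) * z ^ n
        ≤ z * (∑ n ∈ range N, (catalan n : ℝ) * z ^ n) ^ 2 + 1 :=
          sum_range_succ_catalan_mul_pow_le hz₀ N
      _ ≤ z * catalanGF z ^ 2 + 1 := by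
          gcongr
      _ = catalanGF z := (catalanGF_eq_mul_sq_add_one hz).symm

lemma tsum_catalan_mul_pow_eq_mul_sq_add_one
    (hsum : Summable fun n => (catalan n : ℝ) * z ^ n) :
    ∑' n, (catalan n : ℝ) * z ^ n = z * (∑' n, (catalan n : ℝ) * z ^ n) ^ 2 + 1 := by
  set t : ℕ → ℝ := fun n => (catalan n : ℝ) * z ^ n
  have hnorm : Summable fun n => ‖t n‖ := hsum.norm
  have hcauchy : ∀ n, ∑ kl ∈ antidiagonal n, t kl.1 * t kl.2 = (catalan (n + 1) : ℝ) * z ^ n := by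
    intro n
    rw [catalan_succ', Nat.cast_sum, sum_mul]
    refine sum_congr rfl fun kl hkl => ?_
    rw [← mem_antidiagonal.mp hkl]
    simp only [t, pow_add, Nat.cast_mul]
    ring
  calc ∑' n, t n = ∑' n, t (n + 1) + t 0 := hsum.tsum_eq_zero_add.trans (add_comm _ _)
    _ = z * ∑' n, (catalan (n + 1) : ℝ) * z ^ n + 1 := by
        rw [← tsum_mul_left]
        simp only [t, pow_succ, catalan_zero]
        congr 1
        · exact tsum_congr fun n => by ring
        · simp
    _ = z * (∑' n, t n) ^ 2 + 1 := by
        rw [sq, tsum_mul_tsum_eq_tsum_sum_antidiagonal_of_summable_norm hnorm hnorm]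
        simp only [hcauchy]

theorem hasSum_catalan_mul_pow (hz₀ : 0 ≤ z) (hz : z ≤ 1 / 4) :
    HasSum (fun n => (catalan n : ℝ) * z ^ n) (catalanGF z) := by
  have hsum : Summable fun n => (catalan n : ℝ) * z ^ n :=
    summable_of_sum_range_le (fun n => by positivity)
      (sum_range_catalan_mul_pow_le_catalanGF hz₀ hz)
  have hle : ∑' n, (catalan n : ℝ) * z ^ n ≤ catalanGF z :=
    Real.tsum_le_of_sum_range_le (fun n => by positivity)
      (sum_range_catalan_mul_pow_le_catalanGF hz₀ hz)
  have hF := tsum_catalan_mul_pow_eq_mul_sq_add_one hsum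
  have hG := catalanGF_eq_mul_sq_add_one hz
  have hG₁ := two_mul_mul_catalanGF_le_one hz
  set F := ∑' n, (catalan n : ℝ) * z ^ n
  have hroots : (catalanGF z - F) * (1 - z * (F + catalanGF z)) = 0 := by
    linear_combination hG - hF
  suffices F = catalanGF z from this ▸ hsum.hasSum
  refine hle.antisymm (not_lt.1 fun hlt => ?_)
  rcases hz₀.eq_or_lt with rfl | hz₀
  · simp only [zero_mul, zero_add] at hF hG
    linarith
  · nlinarith [mul_pos hz₀ (sub_pos.2 hlt)]

end CatalanGF

lemma catalan_mul_factorial_mul_factorial_succ (n : ℕ) :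
    catalan n * (n ! * (n + 1)!) = (2 * n)! := by
  have hchoose := Nat.choose_mul_factorial_mul_factorial (Nat.le_mul_of_pos_left n two_pos)
  rw [two_mul n, Nat.add_sub_cancel, ← two_mul] at hchoose
  rw [← hchoose, ← Nat.centralBinom_eq_two_mul_choose, ← succ_mul_catalan_eq_centralBinom,
    Nat.factorial_succ]
  ring

lemma integral_pow_mul_exp_neg_mul_Ioi {a : ℝ} (ha : 0 < a) (k : ℕ) :
    ∫ x in Set.Ioi 0, x ^ k * exp (-(a * x)) = k ! / a ^ (k + 1) := by
  have h := integral_rpow_mul_exp_neg_mul_Ioi (Nat.cast_add_one_pos k) ha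
  rw [add_sub_cancel_right, Gamma_nat_eq_factorial, ← Nat.cast_add_one, rpow_natCast,
    one_div, inv_pow, ← div_eq_inv_mul] at h
  simpa only [rpow_natCast] using h

lemma integrableOn_pow_mul_exp_neg_mul_Ioi {a : ℝ} (ha : 0 < a) (k : ℕ) :
    IntegrableOn (fun x : ℝ => x ^ k * exp (-(a * x))) (Set.Ioi 0) := by
  simpa only [rpow_one, rpow_natCast, neg_mul] using
    integrableOn_rpow_mul_exp_neg_mul_rpow (p := 1) (s := k) (b := a)
      (neg_one_lt_zero.trans_le k.cast_nonneg) one_pos ha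

/-- The `n`-th term of the series of `x ↦ e^{-s x} ℓ(x)`, where `a = λ + s`. -/
noncomputable def laplaceEllTerm (lam a : ℝ) (n : ℕ) (x : ℝ) : ℝ :=
  (lam / 2) ^ (2 * n + 1) / (n ! * (n + 1)! : ℝ) * (x ^ (2 * n) * exp (-(a * x)))

lemma exp_neg_mul_mul_ellDensity_eq_tsum (lam s : ℝ) {x : ℝ} (hx : x ≠ 0) :
    exp (-s * x) * ellDensity lam x = ∑' n, laplaceEllTerm lam (lam + s) n x := by
  rw [ellDensity, besselI1, ← mul_assoc, ← tsum_mul_left]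
  refine tsum_congr fun n => ?_
  have hexp : exp (-s * x) * exp (-lam * x) = exp (-((lam + s) * x)) := by
    rw [← exp_add]; ring_nf
  rw [laplaceEllTerm, ← hexp,
    show (lam * x / 2) ^ (2 * n + 1) = (lam / 2) ^ (2 * n + 1) * x ^ (2 * n) * x by ring]
  field_simp

lemma laplaceEllTerm_nonneg {lam : ℝ} (hlam : 0 ≤ lam) (a : ℝ) (n : ℕ) (x : ℝ) :
    0 ≤ laplaceEllTerm lam a n x := by
  have := (even_two_mul n).pow_nonneg x
  unfold laplaceEllTerm
  positivity

lemma integrableOn_laplaceEllTerm (lam : ℝ) {a : ℝ} (ha : 0 < a) (n : ℕ) :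
    IntegrableOn (laplaceEllTerm lam a n) (Set.Ioi 0) :=
  (integrableOn_pow_mul_exp_neg_mul_Ioi ha (2 * n)).const_mul _

lemma integral_laplaceEllTerm (lam : ℝ) {a : ℝ} (ha : 0 < a) (n : ℕ) :
    ∫ x in Set.Ioi 0, laplaceEllTerm lam a n x = catalan n * (lam / (2 * a)) ^ (2 * n + 1) := by
  have hcat : (catalan n : ℝ) = (2 * n)! / (n ! * (n + 1)!) := by
    rw [eq_div_iff (by positivity)]
    exact_mod_cast catalan_mul_factorial_mul_factorial_succ n
  simp only [laplaceEllTerm]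
  rw [integral_const_mul, integral_pow_mul_exp_neg_mul_Ioi ha, hcat, div_pow lam (2 * a),
    div_pow lam 2, mul_pow]
  ring

lemma hasSum_catalan_mul_pow_two_mul_add_one {Z : ℝ} (hZ : Z ^ 2 ≤ 1 / 4) :
    HasSum (fun n => (catalan n : ℝ) * Z ^ (2 * n + 1)) (Z * catalanGF (Z ^ 2)) :=
  ((hasSum_catalan_mul_pow (sq_nonneg Z) hZ).mul_left Z).congr_fun fun n => by ring

lemma div_two_mul_mul_catalanGF_sq (lam : ℝ) {a : ℝ} (ha : 0 < a) :
    lam / (2 * a) * catalanGF ((lam / (2 * a)) ^ 2) = lam / (a + √(a ^ 2 - lam ^ 2)) := by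
  have hsqrt : √(1 - 4 * (lam / (2 * a)) ^ 2) = √(a ^ 2 - lam ^ 2) / a := by
    rw [← sqrt_sq ha.le, ← sqrt_div' _ (sq_nonneg a), sqrt_sq ha.le]
    congr 1
    field_simp
    ring
  rw [catalanGF, hsqrt]
  field_simp

/-- The Laplace transform of `ℓ(x) = (1/x) e^{-λx} I₁(λx)` is
`Lℓ(s) = λ / (λ + s + √((λ+s)² - λ²))` for `s > 0`. -/
theorem laplace_transform_ellDensity (lam s : ℝ) (hlam : 0 < lam) (hs : 0 < s) :
    ∫ x in Set.Ioi (0 : ℝ), Real.exp (-s * x) * ellDensity lam x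
      = lam / (lam + s + Real.sqrt ((lam + s) ^ 2 - lam ^ 2)) := by
  have ha : 0 < lam + s := by linarith
  have hZ : (lam / (2 * (lam + s))) ^ 2 ≤ 1 / 4 := by
    rw [div_pow, div_le_iff₀ (by positivity)]
    nlinarith
  have hterms : HasSum (fun n => ∫ x in Set.Ioi 0, laplaceEllTerm lam (lam + s) n x)
      (lam / (2 * (lam + s)) * catalanGF ((lam / (2 * (lam + s))) ^ 2)) := by
    simpa only [integral_laplaceEllTerm lam ha] using hasSum_catalan_mul_pow_two_mul_add_one hZ
  have hnorm : Summable fun n => ∫ x in Set.Ioi 0, ‖laplaceEllTerm lam (lam + s) n x‖ := by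
    simpa only [norm_of_nonneg (laplaceEllTerm_nonneg hlam.le _ _ _)] using hterms.summable
  rw [← div_two_mul_mul_catalanGF_sq lam ha, ← hterms.tsum_eq,
    integral_tsum_of_summable_integral_norm (integrableOn_laplaceEllTerm lam ha) hnorm]
  exact setIntegral_congr_fun measurableSet_Ioi fun x hx =>
    exp_neg_mul_mul_ellDensity_eq_tsum lam s (ne_of_gt hx)
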